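/- Let n ≥ 1 and let F : ℝ → Matrix (Fin n) ℝ be differentiable at t₀ with F(t₀) invertible and Ḟ(t₀) = L · F(t₀) for some matrix L (the velocity gradient along the trajectory). Set S := (L + Lᵀ)/2, C(t) := F(t)F(t)ᵀ, ν(t) := √( inf{ v·C(t)v : ‖v‖ = 1 } ) (the smallest singular value of F(t)), and let E be the eigenspace of C(t₀) for the eigenvalue ν(t₀)². Then the right derivative of ν at t₀ exists and satisfies lim_{h→0⁺} (ν(t₀+h) − ν(t₀))/h = ν(t₀) · min{ e·Se : e ∈ E, ‖e‖ = 1 }. -/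

import Mathlib

open Matrix Filter

/-- The Euclidean norm of a vector in `ℝⁿ`. -/
noncomputable def euclNorm {n : ℕ} (v : Fin n → ℝ) : ℝ := Real.sqrt (∑ i, v i ^ 2)

/-!
`ν(t)²` is the minimum of `v ⬝ᵥ C(t) *ᵥ v` over the unit sphere, and
`C(t₀ + h) = C(t₀) + h (L C(t₀) + C(t₀) Lᵀ) + o(h)` entrywise, hence uniformly on the sphere.
By Danskin's theorem the right derivative of a minimum over a compact set is the minimum of the
derivative over the minimisers at `t₀`. Here the minimisers are the unit eigenvectors of `C(t₀)`
for `ν(t₀)²`, on which `e ⬝ᵥ (L C + C Lᵀ) *ᵥ e = 2 ν(t₀)² (e ⬝ᵥ S *ᵥ e)`, so `ν²` has right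
derivative `2 ν(t₀)² τ`. Since `C(t₀)` is positive definite, `ν(t₀) > 0` and the square root
can be differentiated.
-/

open Set Topology

theorem euclNorm_eq_one_iff {n : ℕ} {v : Fin n → ℝ} : euclNorm v = 1 ↔ v ⬝ᵥ v = 1 := by
  simp [euclNorm, dotProduct, sq]

theorem setOf_exists_euclNorm_eq_one {n : ℕ} (f : (Fin n → ℝ) → ℝ) :
    {x | ∃ v, euclNorm v = 1 ∧ x = f v} = f '' {v | v ⬝ᵥ v = 1} := by
  ext x
  exact exists_congr fun v => and_congr euclNorm_eq_one_iff eq_comm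

theorem setOf_exists_and_euclNorm_eq_one {n : ℕ} (P : (Fin n → ℝ) → Prop)
    (f : (Fin n → ℝ) → ℝ) :
    {x | ∃ v, P v ∧ euclNorm v = 1 ∧ x = f v} = f '' {v | P v ∧ v ⬝ᵥ v = 1} := by
  ext x
  simp only [mem_image, mem_ofPred_eq, euclNorm_eq_one_iff, and_assoc, eq_comm (a := x)]

theorem HasDerivWithinAt.tendsto_slope_zero_right {f : ℝ → ℝ} {f' x : ℝ}
    (h : HasDerivWithinAt f f' (Ioi x) x) :
    Tendsto (fun t => (f (x + t) - f x) / t) (𝓝[>] 0) (𝓝 f') := by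
  rw [hasDerivWithinAt_iff_tendsto_slope' self_notMem_Ioi] at h
  have hmap : 𝓝[>] x = map (x + ·) (𝓝[>] 0) := by simp
  rw [hmap, tendsto_map'_iff] at h
  refine h.congr fun t => ?_
  simp [slope_def_field]

theorem IsMinOn.csInf_image_eq {α β : Type*} [ConditionallyCompleteLattice β] {f : α → β}
    {K : Set α} {e : α} (he : IsMinOn f K e) (heK : e ∈ K) : sInf (f '' K) = f e :=
  IsLeast.csInf_eq ⟨mem_image_of_mem f heK, forall_mem_image.2 fun _ hv => he hv⟩

section Danskin

variable {α : Type*} [TopologicalSpace α] {K : Set α}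

theorem IsCompact.exists_pos_forall_lt_of_almost_min (hK : IsCompact K) {f g : α → ℝ}
    (hf : Continuous f) (hg : Continuous g) {m a : ℝ} (hm : ∀ v ∈ K, m ≤ f v)
    (ha : ∀ v ∈ K, f v = m → a < g v) :
    ∃ ρ > 0, ∀ v ∈ K, f v < m + ρ → a < g v := by
  rcases (K ∩ {v | g v ≤ a}).eq_empty_or_nonempty with hK' | hK'
  · exact ⟨1, one_pos, fun v hv _ => not_le.1 fun hgv => hK'.subset ⟨hv, hgv⟩⟩
  obtain ⟨v₀, ⟨hv₀K, hv₀a⟩, hv₀min⟩ :=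
    (hK.inter_right (isClosed_le hg continuous_const)).exists_isMinOn hK' hf.continuousOn
  have hm_lt : m < f v₀ := (hm v₀ hv₀K).lt_of_ne fun h => (ha v₀ hv₀K h.symm).not_ge hv₀a
  refine ⟨f v₀ - m, sub_pos.2 hm_lt, fun v hv hfv => not_le.1 fun hgv => ?_⟩
  have : f v₀ ≤ f v := hv₀min ⟨hv, hgv⟩
  linarith

variable {g : ℝ → α → ℝ} {g' : α → ℝ} {t₀ : ℝ}

theorem IsCompact.eventually_slope_sInf_image_lt (hK : IsCompact K)
    (hg_cont : ∀ t, Continuous (g t))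
    (hg : ∀ ε > 0, ∀ᶠ t in 𝓝 t₀, ∀ v ∈ K, |g t v - g t₀ v - (t - t₀) * g' v| ≤ ε * |t - t₀|)
    {e : α} (heK : e ∈ K) (he : IsMinOn (g t₀) K e) {a : ℝ} (ha : g' e < a) :
    ∀ᶠ t in 𝓝[>] t₀, slope (fun t => sInf (g t '' K)) t₀ t < a := by
  filter_upwards [self_mem_nhdsWithin,
    nhdsWithin_le_nhds (hg ((a - g' e) / 2) (by linarith))] with t (ht : t₀ < t) hgt
  rw [abs_of_pos (sub_pos.2 ht)] at hgt
  have hexp := (abs_le.1 (hgt e heK)).2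
  have hφ : sInf (g t '' K) ≤ g t e :=
    csInf_le (hK.image (hg_cont t)).bddBelow (mem_image_of_mem _ heK)
  rw [slope_def_field, he.csInf_image_eq heK, div_lt_iff₀ (sub_pos.2 ht)]
  nlinarith

theorem IsCompact.eventually_lt_slope_sInf_image (hK : IsCompact K) (hne : K.Nonempty)
    (hg_cont : ∀ t, Continuous (g t)) (hg' : Continuous g')
    (hg : ∀ ε > 0, ∀ᶠ t in 𝓝 t₀, ∀ v ∈ K, |g t v - g t₀ v - (t - t₀) * g' v| ≤ ε * |t - t₀|)
    {a b : ℝ} (hab : a < b) (hb : ∀ v ∈ K, IsMinOn (g t₀) K v → b ≤ g' v) :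
    ∀ᶠ t in 𝓝[>] t₀, a < slope (fun t => sInf (g t '' K)) t₀ t := by
  obtain ⟨e, heK, he⟩ := hK.exists_isMinOn hne (hg_cont t₀).continuousOn
  obtain ⟨B, hB⟩ := hK.exists_bound_of_continuousOn hg'.continuousOn
  set m := g t₀ e
  obtain ⟨a', ha', ha'b⟩ := exists_between hab
  obtain ⟨ρ, hρ, hgap⟩ := hK.exists_pos_forall_lt_of_almost_min (hg_cont t₀) hg'
    (fun v hv => he hv) fun v hv hvm =>
      ha'b.trans_le (hb v hv fun w hw => hvm.trans_le (he hw))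
  have hsmall : ∀ᶠ t in 𝓝[>] t₀, (t - t₀) * (B + |a'|) < ρ :=
    (((continuous_sub_right t₀).mul continuous_const).tendsto' t₀ 0 (by simp)).mono_left
      nhdsWithin_le_nhds |>.eventually_lt_const hρ
  filter_upwards [self_mem_nhdsWithin, hsmall,
    nhdsWithin_le_nhds (hg ((a' - a) / 2) (by linarith))] with t (ht : t₀ < t) hsmall hgt
  rw [abs_of_pos (sub_pos.2 ht)] at hgt
  -- near-minimisers have `a' < g' v`; the others lie above `m + ρ`, which beats `(t - t₀) B`
  have hlow : ∀ v ∈ K, m + (t - t₀) * (a' - (a' - a) / 2) ≤ g t v := by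
    intro v hv
    have hexp := (abs_le.1 (hgt v hv)).1
    have hg'v := neg_le_of_abs_le (hB v hv)
    have hmv : m ≤ g t₀ v := he hv
    rcases lt_or_ge (g t₀ v) (m + ρ) with hnear | hfar
    · nlinarith [hgap v hv hnear]
    · nlinarith [le_abs_self a']
  have hφ := le_csInf (hne.image _) (forall_mem_image.2 hlow)
  rw [slope_def_field, he.csInf_image_eq heK, lt_div_iff₀ (sub_pos.2 ht)]
  nlinarith

theorem IsCompact.hasDerivWithinAt_sInf_image (hK : IsCompact K) (hne : K.Nonempty)
    (hg_cont : ∀ t, Continuous (g t)) (hg' : Continuous g')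
    (hg : ∀ ε > 0, ∀ᶠ t in 𝓝 t₀, ∀ v ∈ K, |g t v - g t₀ v - (t - t₀) * g' v| ≤ ε * |t - t₀|) :
    HasDerivWithinAt (fun t => sInf (g t '' K)) (sInf (g' '' {v ∈ K | IsMinOn (g t₀) K v}))
      (Ioi t₀) t₀ := by
  obtain ⟨e, heK, he⟩ := hK.exists_isMinOn hne (hg_cont t₀).continuousOn
  obtain ⟨B, hB⟩ := hK.exists_bound_of_continuousOn hg'.continuousOn
  have hbdd : BddBelow (g' '' {v ∈ K | IsMinOn (g t₀) K v}) :=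
    ⟨-B, forall_mem_image.2 fun v hv => neg_le_of_abs_le (hB v hv.1)⟩
  rw [hasDerivWithinAt_iff_tendsto_slope' self_notMem_Ioi, tendsto_order]
  refine ⟨fun a ha => hK.eventually_lt_slope_sInf_image hne hg_cont hg' hg ha
    fun v hv hvmin => csInf_le hbdd (mem_image_of_mem g' ⟨hv, hvmin⟩), fun a ha => ?_⟩
  obtain ⟨_, ⟨e', ⟨he'K, he'min⟩, rfl⟩, he'a⟩ :=
    exists_lt_of_csInf_lt (Nonempty.image g' (s := {v ∈ K | IsMinOn (g t₀) K v}) ⟨e, heK, he⟩) ha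
  exact hK.eventually_slope_sInf_image_lt hg_cont hg he'K he'min he'a

end Danskin

section Rayleigh

variable {ι : Type*} [Fintype ι]

theorem abs_le_one_of_dotProduct_self_eq_one {v : ι → ℝ} (hv : v ⬝ᵥ v = 1) (i : ι) :
    |v i| ≤ 1 := by
  rw [abs_le_one_iff_mul_self_le_one, ← hv]
  exact Finset.single_le_sum (fun j _ => mul_self_nonneg (v j)) (Finset.mem_univ i)

theorem nonempty_setOf_dotProduct_self_eq_one [Nonempty ι] :
    {v : ι → ℝ | v ⬝ᵥ v = 1}.Nonempty := by
  classical
  exact ⟨Pi.single (Classical.arbitrary ι) 1, by simp⟩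

theorem isCompact_setOf_dotProduct_self_eq_one : IsCompact {v : ι → ℝ | v ⬝ᵥ v = 1} := by
  refine Metric.isCompact_of_isClosed_isBounded
    (isClosed_eq (continuous_id.dotProduct continuous_id) continuous_const) ?_
  refine (Metric.isBounded_closedBall (x := 0) (r := 1)).subset fun v hv => ?_
  rw [Metric.mem_closedBall, dist_zero_right, pi_norm_le_iff_of_nonneg zero_le_one]
  exact abs_le_one_of_dotProduct_self_eq_one hv

theorem continuous_dotProduct_mulVec_self (M : Matrix ι ι ℝ) :
    Continuous fun v : ι → ℝ => v ⬝ᵥ M *ᵥ v :=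
  continuous_id.dotProduct (continuous_const.matrix_mulVec continuous_id)

theorem abs_dotProduct_mulVec_le_sum_abs (M : Matrix ι ι ℝ) {v : ι → ℝ}
    (hv : ∀ i, |v i| ≤ 1) :
    |v ⬝ᵥ M *ᵥ v| ≤ ∑ i, ∑ j, |M i j| := by
  simp only [dotProduct, mulVec, Finset.mul_sum]
  refine (Finset.abs_sum_le_sum_abs _ _).trans (Finset.sum_le_sum fun i _ => ?_)
  refine (Finset.abs_sum_le_sum_abs _ _).trans (Finset.sum_le_sum fun j _ => ?_)
  rw [abs_mul, abs_mul]
  calc |v i| * (|M i j| * |v j|) ≤ 1 * (|M i j| * 1) := by gcongr <;> exact hv _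
    _ = |M i j| := by ring

theorem eventually_abs_dotProduct_mulVec_sub_le {C : ℝ → Matrix ι ι ℝ} {D : Matrix ι ι ℝ}
    {t₀ : ℝ} (hC : ∀ i j, HasDerivAt (fun t => C t i j) (D i j) t₀) {ε : ℝ} (hε : 0 < ε) :
    ∀ᶠ t in 𝓝 t₀, ∀ v : ι → ℝ, (∀ i, |v i| ≤ 1) →
      |v ⬝ᵥ C t *ᵥ v - v ⬝ᵥ C t₀ *ᵥ v - (t - t₀) * (v ⬝ᵥ D *ᵥ v)| ≤ ε * |t - t₀| := by
  have hR : (fun t => ∑ i, ∑ j, |C t i j - C t₀ i j - (t - t₀) * D i j|) =o[𝓝 t₀]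
      fun t => t - t₀ :=
    Asymptotics.IsLittleO.fun_sum fun i _ => Asymptotics.IsLittleO.fun_sum fun j _ =>
      (hasDerivAt_iff_isLittleO.1 (hC i j)).norm_left
  filter_upwards [hR.def hε] with t ht v hv
  rw [Real.norm_eq_abs, Real.norm_eq_abs] at ht
  have hlin : v ⬝ᵥ C t *ᵥ v - v ⬝ᵥ C t₀ *ᵥ v - (t - t₀) * (v ⬝ᵥ D *ᵥ v)
      = v ⬝ᵥ (C t - C t₀ - (t - t₀) • D) *ᵥ v := by
    simp only [sub_mulVec, smul_mulVec, dotProduct_sub, dotProduct_smul, smul_eq_mul]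
  calc _ = |v ⬝ᵥ (C t - C t₀ - (t - t₀) • D) *ᵥ v| := by rw [hlin]
    _ ≤ ∑ i, ∑ j, |C t i j - C t₀ i j - (t - t₀) * D i j| :=
      abs_dotProduct_mulVec_le_sum_abs _ hv
    _ ≤ ε * |t - t₀| := (le_abs_self _).trans ht

theorem hasDerivAt_mul_transpose_apply {m n : Type*} [Fintype n] {F : ℝ → Matrix m n ℝ}
    {F' : Matrix m n ℝ} {t₀ : ℝ} (hF : ∀ i j, HasDerivAt (fun t => F t i j) (F' i j) t₀)
    (i j : m) :
    HasDerivAt (fun t => (F t * (F t)ᵀ) i j) ((F' * (F t₀)ᵀ + F t₀ * F'ᵀ) i j) t₀ := by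
  simpa only [mul_apply, transpose_apply, Matrix.add_apply, ← Finset.sum_add_distrib] using
    HasDerivAt.fun_sum fun k _ => (hF i k).fun_mul (hF j k)

theorem mul_dotProduct_self_le_of_isMinOn {A : Matrix ι ι ℝ} {v : ι → ℝ}
    (hmin : IsMinOn (fun u => u ⬝ᵥ A *ᵥ u) {u | u ⬝ᵥ u = 1} v) (x : ι → ℝ) :
    (v ⬝ᵥ A *ᵥ v) * (x ⬝ᵥ x) ≤ x ⬝ᵥ A *ᵥ x := by
  rcases eq_or_ne x 0 with rfl | hx
  · simp
  have hxx : 0 < x ⬝ᵥ x := (Finset.sum_nonneg fun i _ => mul_self_nonneg (x i)).lt_of_ne'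
    (dotProduct_self_eq_zero.not.2 hx)
  set c := √(x ⬝ᵥ x)
  have hc : c ^ 2 = x ⬝ᵥ x := Real.sq_sqrt hxx.le
  have hc0 : c ≠ 0 := (Real.sqrt_pos.2 hxx).ne'
  have hu : (c⁻¹ • x) ⬝ᵥ (c⁻¹ • x) = 1 := by
    simp only [dotProduct_smul, smul_dotProduct, smul_eq_mul, ← hc]
    field_simp
  have := hmin hu
  simp only [mem_ofPred_eq, mulVec_smul, dotProduct_smul, smul_dotProduct, smul_eq_mul] at this
  rw [← hc]
  calc (v ⬝ᵥ A *ᵥ v) * c ^ 2 ≤ c⁻¹ * (c⁻¹ * (x ⬝ᵥ A *ᵥ x)) * c ^ 2 := by gcongr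
    _ = x ⬝ᵥ A *ᵥ x := by field_simp

theorem mulVec_eq_smul_of_isMinOn {A : Matrix ι ι ℝ} (hA : A.IsHermitian) {v : ι → ℝ}
    (hmin : IsMinOn (fun u => u ⬝ᵥ A *ᵥ u) {u | u ⬝ᵥ u = 1} v) (hv : v ⬝ᵥ v = 1) :
    A *ᵥ v = (v ⬝ᵥ A *ᵥ v) • v := by
  classical
  set μ := v ⬝ᵥ A *ᵥ v
  have hpsd : (A - μ • 1).PosSemidef :=
    .of_dotProduct_mulVec_nonneg (hA.sub (isHermitian_one.smul (IsSelfAdjoint.all μ)))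
      fun x => by
        simpa [sub_mulVec, smul_mulVec, dotProduct_smul, sub_nonneg] using
          mul_dotProduct_self_le_of_isMinOn hmin x
  have h0 := (hpsd.dotProduct_mulVec_zero_iff v).1
    (by simp [sub_mulVec, smul_mulVec, dotProduct_smul, hv, μ])
  rwa [sub_mulVec, smul_mulVec, one_mulVec, sub_eq_zero] at h0

theorem setOf_isMinOn_dotProduct_mulVec_eq {A : Matrix ι ι ℝ} (hA : A.IsHermitian)
    {e : ι → ℝ} (he : e ⬝ᵥ e = 1) (hmin : IsMinOn (fun u => u ⬝ᵥ A *ᵥ u) {u | u ⬝ᵥ u = 1} e) :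
    {v ∈ {u : ι → ℝ | u ⬝ᵥ u = 1} | IsMinOn (fun u => u ⬝ᵥ A *ᵥ u) {u | u ⬝ᵥ u = 1} v} =
      {v | A *ᵥ v = (e ⬝ᵥ A *ᵥ e) • v ∧ v ⬝ᵥ v = 1} := by
  ext v
  constructor
  · rintro ⟨hv, hvmin⟩
    have heq : v ⬝ᵥ A *ᵥ v = e ⬝ᵥ A *ᵥ e := le_antisymm (hvmin he) (hmin hv)
    exact ⟨heq ▸ mulVec_eq_smul_of_isMinOn hA hvmin hv, hv⟩
  · rintro ⟨hAv, hv⟩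
    refine ⟨hv, fun w hw => ?_⟩
    have : v ⬝ᵥ A *ᵥ v = e ⬝ᵥ A *ᵥ e := by
      rw [hAv, dotProduct_smul, hv, smul_eq_mul, mul_one]
    show v ⬝ᵥ A *ᵥ v ≤ w ⬝ᵥ A *ᵥ w
    exact this ▸ hmin hw

theorem dotProduct_mul_add_mul_transpose_mulVec {A : Matrix ι ι ℝ} (hA : A.IsSymm)
    (L : Matrix ι ι ℝ) {e : ι → ℝ} {μ : ℝ} (he : A *ᵥ e = μ • e) :
    e ⬝ᵥ (L * A + A * Lᵀ) *ᵥ e = 2 * μ * (e ⬝ᵥ ((1 / 2 : ℝ) • (L + Lᵀ)) *ᵥ e) := by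
  have hLT : e ⬝ᵥ Lᵀ *ᵥ e = e ⬝ᵥ L *ᵥ e := by
    rw [dotProduct_mulVec, vecMul_transpose, dotProduct_comm]
  have heA : e ᵥ* A = μ • e := by rw [← mulVec_transpose, hA.eq, he]
  simp only [add_mulVec, ← mulVec_mulVec, he, dotProduct_add, dotProduct_mulVec e A, heA,
    smul_mulVec, mulVec_smul, dotProduct_smul, smul_dotProduct, smul_eq_mul, hLT]
  ring

theorem Matrix.PosDef.sInf_dotProduct_mulVec_pos [Nonempty ι] {A : Matrix ι ι ℝ}
    (hA : A.PosDef) : 0 < sInf ((fun v => v ⬝ᵥ A *ᵥ v) '' {v | v ⬝ᵥ v = 1}) := by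
  obtain ⟨e, he, hmin⟩ := (isCompact_setOf_dotProduct_self_eq_one.image
    (continuous_dotProduct_mulVec_self A)).sInf_mem (nonempty_setOf_dotProduct_self_eq_one.image _)
  rw [← hmin]
  exact hA.dotProduct_mulVec_pos fun h => by simp [h] at he

theorem hasDerivWithinAt_sInf_dotProduct_mulVec [Nonempty ι] {C : ℝ → Matrix ι ι ℝ}
    {D : Matrix ι ι ℝ} {t₀ : ℝ} (hC : ∀ i j, HasDerivAt (fun t => C t i j) (D i j) t₀)
    (hC₀ : (C t₀).IsHermitian) :
    HasDerivWithinAt (fun t => sInf ((fun v => v ⬝ᵥ C t *ᵥ v) '' {v | v ⬝ᵥ v = 1}))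
      (sInf ((fun v => v ⬝ᵥ D *ᵥ v) '' {v | C t₀ *ᵥ v =
        sInf ((fun v => v ⬝ᵥ C t₀ *ᵥ v) '' {v | v ⬝ᵥ v = 1}) • v ∧ v ⬝ᵥ v = 1})) (Ioi t₀) t₀ := by
  obtain ⟨e, he, hmin⟩ := isCompact_setOf_dotProduct_self_eq_one.exists_isMinOn
    nonempty_setOf_dotProduct_self_eq_one (continuous_dotProduct_mulVec_self (C t₀)).continuousOn
  rw [hmin.csInf_image_eq he, ← setOf_isMinOn_dotProduct_mulVec_eq hC₀ he hmin]
  exact isCompact_setOf_dotProduct_self_eq_one.hasDerivWithinAt_sInf_image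
    nonempty_setOf_dotProduct_self_eq_one (fun t => continuous_dotProduct_mulVec_self (C t))
    (continuous_dotProduct_mulVec_self D) fun ε hε =>
      (eventually_abs_dotProduct_mulVec_sub_le hC hε).mono fun t ht v hv =>
        ht v (abs_le_one_of_dotProduct_self_eq_one hv)

end Rayleigh

theorem stmt6 (n : ℕ) (hn : 1 ≤ n) (F : ℝ → Matrix (Fin n) (Fin n) ℝ) (t₀ : ℝ)
    (L : Matrix (Fin n) (Fin n) ℝ)
    (hinv : IsUnit (F t₀))
    (hderiv : ∀ i j, HasDerivAt (fun t => F t i j) ((L * F t₀) i j) t₀)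
    (S : Matrix (Fin n) (Fin n) ℝ) (hS : S = (1 / 2 : ℝ) • (L + Lᵀ))
    (ν : ℝ → ℝ)
    (hν : ∀ t, ν t = Real.sqrt
      (sInf {x | ∃ v : Fin n → ℝ, euclNorm v = 1 ∧ x = v ⬝ᵥ (F t * (F t)ᵀ).mulVec v}))
    (τ : ℝ)
    (hτ : τ = sInf {x | ∃ e : Fin n → ℝ, (F t₀ * (F t₀)ᵀ).mulVec e = (ν t₀ ^ 2) • e ∧
      euclNorm e = 1 ∧ x = e ⬝ᵥ S.mulVec e}) :
    Tendsto (fun h : ℝ => (ν (t₀ + h) - ν t₀) / h) (nhdsWithin 0 (Set.Ioi 0))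
      (nhds (ν t₀ * τ)) := by
  have : Nonempty (Fin n) := ⟨⟨0, hn⟩⟩
  set C := fun t => F t * (F t)ᵀ
  set Sph : Set (Fin n → ℝ) := {v | v ⬝ᵥ v = 1}
  have hν' : ν = fun t => √(sInf ((fun v => v ⬝ᵥ C t *ᵥ v) '' Sph)) :=
    funext fun t => by rw [hν, setOf_exists_euclNorm_eq_one]
  have hCpos : (C t₀).PosDef := by
    simpa [C, conjTranspose_eq_transpose_of_trivial] using
      PosDef.mul_conjTranspose_self (F t₀) (vecMul_injective_iff_isUnit.2 hinv)
  set m := sInf ((fun v => v ⬝ᵥ C t₀ *ᵥ v) '' Sph)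
  have hm_pos : 0 < m := hCpos.sInf_dotProduct_mulVec_pos
  set E := {v | C t₀ *ᵥ v = m • v ∧ v ⬝ᵥ v = 1}
  have hτE : τ = sInf ((fun v => v ⬝ᵥ S *ᵥ v) '' E) := by
    rw [hτ, setOf_exists_and_euclNorm_eq_one, hν', Real.sq_sqrt hm_pos.le]
  have hCderiv : ∀ i j, HasDerivAt (fun t => C t i j) ((L * C t₀ + C t₀ * Lᵀ) i j) t₀ := by
    simpa only [C, transpose_mul, Matrix.mul_assoc] using hasDerivAt_mul_transpose_apply hderiv
  have hφ : HasDerivWithinAt (fun t => sInf ((fun v => v ⬝ᵥ C t *ᵥ v) '' Sph)) (2 * m * τ)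
      (Ioi t₀) t₀ := by
    convert hasDerivWithinAt_sInf_dotProduct_mulVec hCderiv hCpos.isHermitian using 1
    rw [hτE, show 2 * m * _ = (2 * m) • _ from rfl, ← Real.sInf_smul_of_nonneg (by positivity),
      ← image_smul, image_image]
    refine congrArg sInf (image_congr fun v hv => ?_)
    rw [smul_eq_mul, hS,
      dotProduct_mul_add_mul_transpose_mulVec (isSymm_mul_transpose_self _) L hv.1]
  rw [hν']
  convert (hφ.sqrt hm_pos.ne').tendsto_slope_zero_right using 2
  change √m * τ = 2 * m * τ / (2 * √m)
  field_simp
  rw [Real.sq_sqrt hm_pos.le, mul_comm]
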